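/- arXiv:1901.05503 — 8 statements merged into one kernel-verified Lean document; each statement's English description precedes it below -/
import Mathlib

section
/- Let P be a finite poset. The set of extreme points of the compact convex set Δ(P) ⊆ ℝ^P is exactly {1_F : F ⊆ P is an upper set}, where 1_F denotes the 0/1 indicator vector of F. In particular, the vertices of Δ(P) are in bijection with the order ideals of P (an upper set corresponding to the order ideal given by its complement), so Δ(P) has exactly |J(P)| vertices. -/
/-!
An indicator vector of an upper set is a vertex of the cube `[0,1]^P` lying in `Δ(P)`, hence a
vertex of `Δ(P)`. Conversely, every `x ∈ Δ(P)` is the midpoint of `min (2x) 1` and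
`max (2x - 1) 0`, which lie in `Δ(P)` again because they arise from `x` by monotone self-maps of
`[0,1]`. So an extreme point satisfies `x = min (2x) 1`, i.e. takes only the values `0` and `1`,
and is the indicator vector of the upper set `{x = 1}`. Complementation matches upper sets with
order ideals.
-/

/-- The order polytope of a finite poset `P`. -/
def orderPolytope (P : Type*) [PartialOrder P] : Set (P → ℝ) :=
  {x | (∀ u : P, 0 ≤ x u ∧ x u ≤ 1) ∧ ∀ u v : P, u ≤ v → x u ≤ x v}

/-- The 0/1 indicator vector of a subset `F ⊆ P`. -/
noncomputable def indicatorVec {P : Type*} (F : Set P) : P → ℝ :=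
  Set.indicator F (fun _ => 1)

open Set

section

variable {P : Type*}

theorem indicatorVec_injective : Function.Injective (indicatorVec (P := P)) :=
  fun _ _ h ↦ indicator_one_inj ℝ h

theorem indicatorVec_mem_extremePoints_pi_Icc (F : Set P) :
    indicatorVec F ∈ (univ.pi fun _ : P ↦ Icc (0 : ℝ) 1).extremePoints ℝ := by
  rw [extremePoints_pi]
  intro u _
  by_cases hu : u ∈ F <;> simp [indicatorVec, hu]

theorem eq_indicatorVec_of_forall_eq_zero_or_eq_one {x : P → ℝ} (h : ∀ u, x u = 0 ∨ x u = 1) :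
    x = indicatorVec {u | x u = 1} := funext fun u ↦ by
  rcases h u with hu | hu <;> simp [indicatorVec, hu]

theorem ncard_setOf_isUpperSet [LE P] :
    {F : Set P | IsUpperSet F}.ncard = Nat.card {τ : Set P // IsLowerSet τ} :=
  Nat.card_congr <| (compl_involutive.toPerm _).subtypeEquiv fun _ ↦ isLowerSet_compl.symm

section PartialOrder

variable [PartialOrder P]

theorem orderPolytope_subset_pi_Icc : orderPolytope P ⊆ univ.pi fun _ ↦ Icc 0 1 :=
  fun _ hx u _ ↦ hx.1 u

theorem indicatorVec_mem_orderPolytope {F : Set P} (hF : IsUpperSet F) :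
    indicatorVec F ∈ orderPolytope P := by
  refine ⟨fun u ↦ ?_, fun u v huv ↦ ?_⟩
  · by_cases hu : u ∈ F <;> simp [indicatorVec, hu]
  · by_cases hu : u ∈ F
    · simp [indicatorVec, hu, hF huv hu]
    · by_cases hv : v ∈ F <;> simp [indicatorVec, hu, hv]

theorem indicatorVec_mem_extremePoints_orderPolytope {F : Set P} (hF : IsUpperSet F) :
    indicatorVec F ∈ (orderPolytope P).extremePoints ℝ :=
  inter_extremePoints_subset_extremePoints_of_subset orderPolytope_subset_pi_Icc
    ⟨indicatorVec_mem_orderPolytope hF, indicatorVec_mem_extremePoints_pi_Icc F⟩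

theorem comp_mem_orderPolytope {f : ℝ → ℝ} (hf : Monotone f)
    (hf_maps : MapsTo f (Icc 0 1) (Icc 0 1)) {x : P → ℝ} (hx : x ∈ orderPolytope P) :
    f ∘ x ∈ orderPolytope P :=
  ⟨fun u ↦ hf_maps (hx.1 u), fun u v huv ↦ hf (hx.2 u v huv)⟩

theorem eq_zero_or_eq_one_of_mem_extremePoints_orderPolytope {x : P → ℝ}
    (hx : x ∈ (orderPolytope P).extremePoints ℝ) (u : P) : x u = 0 ∨ x u = 1 := by
  set f : ℝ → ℝ := fun s ↦ min (2 * s) 1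
  set g : ℝ → ℝ := fun s ↦ max (2 * s - 1) 0
  have hf : Monotone f := fun s t hst ↦ min_le_min_right 1 (by linarith)
  have hg : Monotone g := fun s t hst ↦ max_le_max_right 0 (by linarith)
  have hf_maps : MapsTo f (Icc 0 1) (Icc 0 1) := fun s hs ↦
    ⟨le_min (by linarith [hs.1]) zero_le_one, min_le_right _ _⟩
  have hg_maps : MapsTo g (Icc 0 1) (Icc 0 1) := fun s hs ↦
    ⟨le_max_right _ _, max_le (by linarith [hs.2]) zero_le_one⟩
  have hfg : ∀ s, f s + g s = 2 * s := fun s ↦ by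
    rcases le_total (2 * s) 1 with h | h <;> simp [f, g, h]
  have hseg : x ∈ openSegment ℝ (f ∘ x) (g ∘ x) := by
    refine ⟨1 / 2, 1 / 2, by norm_num, by norm_num, by norm_num, funext fun w ↦ ?_⟩
    simp only [Pi.add_apply, Pi.smul_apply, smul_eq_mul, Function.comp_apply]
    linarith [hfg (x w)]
  have hfix : min (2 * x u) 1 = x u := congrFun
    (hx.2 (comp_mem_orderPolytope hf hf_maps hx.1) (comp_mem_orderPolytope hg hg_maps hx.1) hseg) u
  rcases min_choice (2 * x u) 1 with h | h <;> rw [h] at hfix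
  · left; linarith
  · right; exact hfix.symm

theorem isUpperSet_setOf_eq_one {x : P → ℝ} (hx : x ∈ orderPolytope P) :
    IsUpperSet {u | x u = 1} := fun u v huv hu ↦
  le_antisymm (hx.1 v).2 (hu ▸ hx.2 u v huv)

theorem extremePoints_orderPolytope_eq_image :
    (orderPolytope P).extremePoints ℝ = indicatorVec '' {F | IsUpperSet F} := by
  refine Subset.antisymm (fun x hx ↦ ⟨_, isUpperSet_setOf_eq_one hx.1, ?_⟩) ?_
  · exact (eq_indicatorVec_of_forall_eq_zero_or_eq_one
      (eq_zero_or_eq_one_of_mem_extremePoints_orderPolytope hx)).symm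
  · rintro _ ⟨F, hF, rfl⟩
    exact indicatorVec_mem_extremePoints_orderPolytope hF

end PartialOrder

end

theorem extremePoints_orderPolytope_general (P : Type*) [PartialOrder P] :
    Set.extremePoints ℝ (orderPolytope P) =
      {x : P → ℝ | ∃ F : Set P, IsUpperSet F ∧ x = indicatorVec F} ∧
    (Set.extremePoints ℝ (orderPolytope P)).ncard =
      Nat.card {τ : Set P // IsLowerSet τ} := by
  rw [extremePoints_orderPolytope_eq_image, ncard_image_of_injective _ indicatorVec_injective,
    ncard_setOf_isUpperSet]
  refine ⟨?_, rfl⟩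
  ext x
  simp [eq_comm]

/-- The extreme points of the order polytope `Δ(P)` are exactly the indicator
vectors of upper sets of `P`; consequently the vertices of `Δ(P)` are in bijection
with the order ideals of `P` (complements of upper sets), so there are `|J(P)|`
of them. -/
theorem extremePoints_orderPolytope (P : Type*) [PartialOrder P] [Fintype P] :
    Set.extremePoints ℝ (orderPolytope P) =
      {x : P → ℝ | ∃ F : Set P, IsUpperSet F ∧ x = indicatorVec F} ∧
    (Set.extremePoints ℝ (orderPolytope P)).ncard =
      Nat.card {τ : Set P // IsLowerSet τ} :=
  extremePoints_orderPolytope_general P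
end

section
/- Let P be a finite poset and m ∈ ℕ. A vector x ∈ ℤ^P lies in the dilated order polytope m·Δ(P) = {m·y : y ∈ Δ(P)} if and only if there exist upper sets F₁ ⊇ F₂ ⊇ ⋯ ⊇ F_m of P with x = Σ_{j=1}^m 1_{F_j}; moreover, such a decreasing chain F₁ ⊇ ⋯ ⊇ F_m is unique. Consequently, the number of lattice points of m·Δ(P) equals the number of order-preserving maps from P to the chain {0, 1, …, m}. -/
/-- The dilation `m·Δ = {m·y : y ∈ Δ}` of a subset of `ℝ^P`. -/
def dilate {P : Type*} (m : ℕ) (s : Set (P → ℝ)) : Set (P → ℝ) :=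
  (fun y u => (m : ℝ) * y u) '' s

/-!
A lattice point `x` of `m·Δ(P)` is exactly a monotone map `P → {0, …, m}`. Its strict
superlevel sets `Fⱼ = {u | j < x u}`, `0 ≤ j < m`, form a decreasing chain of upper sets with
`x = Σⱼ 1_{Fⱼ}`. Conversely, in any decreasing chain the indices `j` with `u ∈ Fⱼ` form an
initial segment of `{0, …, m - 1}`, whose length is `x u`, so `u ∈ Fⱼ ↔ j < x u` and the chain
is forced.
-/

open Finset

theorem Fin.mem_iff_lt_card_of_isLowerSet {m : ℕ} {S : Finset (Fin m)}
    (hS : IsLowerSet (S : Set (Fin m))) (j : Fin m) : j ∈ S ↔ (j : ℕ) < #S := by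
  rcases hS.eq_univ_or_Iio with h | ⟨a, h⟩
  · rw [coe_eq_univ] at h
    simp [h]
  · rw [← coe_Iio, coe_inj] at h
    simp [h]

theorem Fin.card_filter_intCast_lt {m : ℕ} {n : ℤ} (h₀ : 0 ≤ n) (hm : n ≤ m) :
    (#{j : Fin m | (j : ℤ) < n} : ℤ) = n := by
  lift n to ℕ using h₀
  simp only [Nat.cast_lt, Fin.card_filter_val_lt]
  omega

theorem sum_indicator_one_apply {ι α R : Type*} [Fintype ι] [AddCommMonoidWithOne R]
    (F : ι → Set α) (u : α) [DecidablePred fun j => u ∈ F j] :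
    ∑ j, (F j).indicator (fun _ => (1 : R)) u = #{j | u ∈ F j} := by
  simp [Set.indicator_apply, sum_boole]

section OrderPolytope

variable {P : Type*} [PartialOrder P] {m : ℕ}

theorem mem_dilate_orderPolytope_iff {x : P → ℝ} :
    x ∈ dilate m (orderPolytope P) ↔ (∀ u, 0 ≤ x u ∧ x u ≤ m) ∧ Monotone x := by
  have hm : (0 : ℝ) ≤ m := m.cast_nonneg
  constructor
  · rintro ⟨y, ⟨hy_bounds, hy_mono⟩, rfl⟩
    refine ⟨fun u => ⟨mul_nonneg hm (hy_bounds u).1, ?_⟩,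
      fun u v huv => mul_le_mul_of_nonneg_left (hy_mono u v huv) hm⟩
    simpa using mul_le_mul_of_nonneg_left (hy_bounds u).2 hm
  · rintro ⟨hx_bounds, hx_mono⟩
    rcases hm.eq_or_lt with hm₀ | hm₀
    · refine ⟨0, ⟨fun _ => by simp, fun _ _ _ => le_rfl⟩, funext fun u => ?_⟩
      have := hx_bounds u
      simp only [Pi.zero_apply, mul_zero]
      linarith
    · refine ⟨fun u => x u / m, ⟨fun u => ⟨?_, ?_⟩, fun u v huv => ?_⟩, ?_⟩
      · exact div_nonneg (hx_bounds u).1 hm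
      · exact (div_le_one hm₀).2 (hx_bounds u).2
      · exact div_le_div_of_nonneg_right (hx_mono huv) hm
      · funext u
        field_simp

theorem intCast_mem_dilate_orderPolytope_iff {x : P → ℤ} :
    (fun u => (x u : ℝ)) ∈ dilate m (orderPolytope P) ↔
      (∀ u, 0 ≤ x u ∧ x u ≤ m) ∧ Monotone x := by
  rw [mem_dilate_orderPolytope_iff]
  simp only [Monotone, Int.cast_le]
  norm_cast

end OrderPolytope

section Chains

variable {P : Type*} {m : ℕ}

def superlevelChain (m : ℕ) (x : P → ℤ) : Fin m → Set P :=
  fun j => {u | (j : ℤ) < x u}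

theorem antitone_superlevelChain (x : P → ℤ) : Antitone (superlevelChain m x) :=
  fun i k hik _ (hu : (k : ℤ) < _) =>
    show (i : ℤ) < _ from lt_of_le_of_lt (by exact_mod_cast hik) hu

theorem isUpperSet_superlevelChain [Preorder P] {x : P → ℤ} (hx : Monotone x) (j : Fin m) :
    IsUpperSet (superlevelChain m x j) :=
  fun _ _ huv (hu : (j : ℤ) < _) => show (j : ℤ) < _ from lt_of_lt_of_le hu (hx huv)

theorem sum_indicator_superlevelChain {x : P → ℤ} (hx : ∀ u, 0 ≤ x u ∧ x u ≤ m) (u : P) :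
    ∑ j, (superlevelChain m x j).indicator (fun _ => (1 : ℤ)) u = x u := by
  classical
  rw [sum_indicator_one_apply, ← Fin.card_filter_intCast_lt (hx u).1 (hx u).2]
  congr!

theorem mem_iff_lt_card_of_antitone {F : Fin m → Set P} (hF : Antitone F) (u : P) (j : Fin m)
    [DecidablePred fun i => u ∈ F i] : u ∈ F j ↔ (j : ℕ) < #{i | u ∈ F i} := by
  simpa using Fin.mem_iff_lt_card_of_isLowerSet (S := {i | u ∈ F i})
    (fun i k hki hi => by simpa using hF hki (by simpa using hi)) j

theorem eq_superlevelChain_of_sum_indicator {F : Fin m → Set P} (hF : Antitone F) {x : P → ℤ}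
    (hx : ∀ u, x u = ∑ j, (F j).indicator (fun _ => (1 : ℤ)) u) :
    F = superlevelChain m x := by
  classical
  funext j
  ext u
  rw [mem_iff_lt_card_of_antitone hF]
  show _ ↔ (j : ℤ) < x u
  rw [hx, sum_indicator_one_apply]
  norm_cast

theorem bounded_monotone_of_sum_indicator [Preorder P] {F : Fin m → Set P}
    (hF : ∀ j, IsUpperSet (F j)) {x : P → ℤ}
    (hx : ∀ u, x u = ∑ j, (F j).indicator (fun _ => (1 : ℤ)) u) :
    (∀ u, 0 ≤ x u ∧ x u ≤ m) ∧ Monotone x := by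
  classical
  refine ⟨fun u => ?_, fun u v huv => ?_⟩ <;> simp only [hx, sum_indicator_one_apply]
  · exact ⟨Nat.cast_nonneg _, by exact_mod_cast (card_filter_le _ _).trans (card_fin m).le⟩
  · exact_mod_cast card_le_card (monotone_filter_right _ fun j _ hu => hF j huv hu)

theorem bounded_monotone_iff_existsUnique_chain [Preorder P] (x : P → ℤ) :
    ((∀ u, 0 ≤ x u ∧ x u ≤ m) ∧ Monotone x) ↔
      ∃! F : Fin m → Set P, (∀ j, IsUpperSet (F j)) ∧ Antitone F ∧
        ∀ u : P, x u = ∑ j : Fin m, Set.indicator (F j) (fun _ => (1 : ℤ)) u := by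
  constructor
  · rintro ⟨hx_bounds, hx_mono⟩
    refine ⟨superlevelChain m x, ⟨isUpperSet_superlevelChain hx_mono,
      antitone_superlevelChain x, fun u => (sum_indicator_superlevelChain hx_bounds u).symm⟩, ?_⟩
    rintro F ⟨-, hF, hsum⟩
    exact eq_superlevelChain_of_sum_indicator hF hsum
  · rintro ⟨F, ⟨hF, -, hsum⟩, -⟩
    exact bounded_monotone_of_sum_indicator hF hsum

end Chains

def boundedMonotoneEquiv (P : Type*) [Preorder P] (m : ℕ) :
    {x : P → ℤ // (∀ u, 0 ≤ x u ∧ x u ≤ m) ∧ Monotone x} ≃ (P →o Fin (m + 1)) where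
  toFun x := ⟨fun u => ⟨(x.1 u).toNat, by have := x.2.1 u; omega⟩, fun u v huv => by
    have := x.2.2 huv
    simp only [Fin.mk_le_mk]
    omega⟩
  invFun f := ⟨fun u => (f u : ℕ),
    fun u => ⟨Nat.cast_nonneg _, Nat.cast_le.2 (Nat.lt_succ_iff.1 (f u).2)⟩,
    fun _ _ huv => Nat.cast_le.2 (f.monotone huv)⟩
  left_inv x := by
    ext u
    exact Int.toNat_of_nonneg (x.2.1 u).1
  right_inv f := by
    ext u
    simp

theorem latticePoints_dilated_orderPolytope_general (P : Type*) [PartialOrder P]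
    (m : ℕ) :
    (∀ x : P → ℤ,
      (fun u => (x u : ℝ)) ∈ dilate m (orderPolytope P) ↔
        ∃! F : Fin m → Set P, (∀ j, IsUpperSet (F j)) ∧ Antitone F ∧
          ∀ u : P, x u = ∑ j : Fin m, Set.indicator (F j) (fun _ => (1 : ℤ)) u) ∧
    Nat.card {x : P → ℤ // (fun u => (x u : ℝ)) ∈ dilate m (orderPolytope P)} =
      Nat.card (P →o Fin (m + 1)) := by
  refine ⟨fun x => intCast_mem_dilate_orderPolytope_iff.trans
    (bounded_monotone_iff_existsUnique_chain x), ?_⟩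
  exact Nat.card_congr <|
    (Equiv.subtypeEquivRight fun _ => intCast_mem_dilate_orderPolytope_iff).trans
      (boundedMonotoneEquiv P m)

/-- A lattice point `x ∈ ℤ^P` lies in `m·Δ(P)` iff it is the sum of the indicator
vectors of a decreasing chain `F₁ ⊇ F₂ ⊇ ⋯ ⊇ F_m` of upper sets of `P`, and such a
chain is unique.  Consequently the number of lattice points of `m·Δ(P)` equals the
number of order-preserving maps from `P` to the chain `{0, 1, …, m}`. -/
theorem latticePoints_dilated_orderPolytope (P : Type*) [PartialOrder P] [Fintype P]
    (m : ℕ) :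
    (∀ x : P → ℤ,
      (fun u => (x u : ℝ)) ∈ dilate m (orderPolytope P) ↔
        ∃! F : Fin m → Set P, (∀ j, IsUpperSet (F j)) ∧ Antitone F ∧
          ∀ u : P, x u = ∑ j : Fin m, Set.indicator (F j) (fun _ => (1 : ℤ)) u) ∧
    Nat.card {x : P → ℤ // (fun u => (x u : ℝ)) ∈ dilate m (orderPolytope P)} =
      Nat.card (P →o Fin (m + 1)) :=
  latticePoints_dilated_orderPolytope_general P m
end

section
/- Let P be a finite poset with n elements. The Lebesgue measure (n-dimensional volume) of the order polytope Δ(P) ⊆ ℝ^P equals e(P)/n!, where e(P) is the number of linear extensions of P. -/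
/-!
For a bijection `σ : P ≃ Fin n`, the points of the unit cube whose coordinates increase along
`σ` form a simplex of volume `1 / n!`: the `n!` such simplices are congruent under permutations of
the coordinates, overlap only in the null set of points with a repeated coordinate, and cover the
cube. A point of `Δ(P)` with distinct coordinates lies in the simplex of the bijection sorting it,
which is a linear extension of `P`; conversely the simplex of a linear extension lies in `Δ(P)`.
So up to a null set `Δ(P)` is the disjoint union of `e(P)` such simplices.
-/

open MeasureTheory ENNReal

open Set Function

section NonInjective

variable {ι : Type*} [Fintype ι] (μ : Measure (ι → ℝ)) [μ.IsAddHaarMeasure]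

theorem addHaar_setOf_apply_eq_apply {i j : ι} (hij : i ≠ j) : μ {x | x i = x j} = 0 := by
  classical
  let L : (ι → ℝ) →ₗ[ℝ] ℝ :=
    LinearMap.proj (R := ℝ) (φ := fun _ : ι => ℝ) i - LinearMap.proj j
  have hL : {x : ι → ℝ | x i = x j} = LinearMap.ker L := by
    ext x
    simp [L, sub_eq_zero]
  refine hL ▸ Measure.addHaar_submodule μ _ fun htop => ?_
  have : L (Pi.single i 1) = 0 := by
    rw [← LinearMap.mem_ker, htop]
    trivial
  simp [L, Pi.single_eq_of_ne' hij] at this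

theorem addHaar_setOf_not_injective : μ {x : ι → ℝ | ¬Injective x} = 0 := by
  have : {x : ι → ℝ | ¬Injective x} = ⋃ (i) (j) (_ : i ≠ j), {x | x i = x j} := by
    ext x
    simp [Injective, and_comm]
  rw [this]
  exact measure_iUnion_null fun i => measure_iUnion_null fun j =>
    measure_iUnion_null (addHaar_setOf_apply_eq_apply μ)

end NonInjective

theorem volume_preserving_comp_equiv {ι : Type*} [Fintype ι] (e : ι ≃ ι) :
    MeasurePreserving (fun x : ι → ℝ => x ∘ e) := by
  have h := volume_measurePreserving_piCongrLeft (fun _ => ℝ) e.symm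
  have he : ⇑(MeasurableEquiv.piCongrLeft (fun _ => ℝ) e.symm) =
      fun x : ι → ℝ => x ∘ e := by
    funext x i
    simpa using MeasurableEquiv.piCongrLeft_apply_apply e.symm (β := fun _ => ℝ) x (e i)
  rwa [he] at h

section SortedSimplex

variable {ι : Type*} [Fintype ι]

def sortedSimplex (σ : ι ≃ Fin (Fintype.card ι)) : Set (ι → ℝ) :=
  Icc 0 1 ∩ {x | Monotone (x ∘ σ.symm)}

theorem measurableSet_sortedSimplex (σ : ι ≃ Fin (Fintype.card ι)) :
    MeasurableSet (sortedSimplex σ) := by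
  have : {x : ι → ℝ | Monotone (x ∘ σ.symm)} =
      ⋂ (i) (j) (_ : i ≤ j), {x | x (σ.symm i) ≤ x (σ.symm j)} := by
    ext x
    simp [Monotone]
  rw [sortedSimplex, this]
  exact measurableSet_Icc.inter <| .iInter fun i => .iInter fun j => .iInter fun _ =>
    measurableSet_le (measurable_pi_apply _) (measurable_pi_apply _)

theorem exists_strictMono_comp_symm {x : ι → ℝ} (hx : Injective x) :
    ∃ σ : ι ≃ Fin (Fintype.card ι), StrictMono (x ∘ σ.symm) := by
  let e := Fintype.equivFin ι
  let σ := e.trans (Tuple.sort (x ∘ e.symm)).symm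
  refine ⟨σ, Monotone.strictMono_of_injective ?_ (hx.comp σ.symm.injective)⟩
  exact Tuple.monotone_sort (x ∘ e.symm)

theorem sortedSimplex_inter_subset {σ τ : ι ≃ Fin (Fintype.card ι)} (hστ : σ ≠ τ) :
    sortedSimplex σ ∩ sortedSimplex τ ⊆ {x | ¬Injective x} := by
  rintro x ⟨⟨-, hσ⟩, ⟨-, hτ⟩⟩ hx
  have hσ' := Monotone.strictMono_of_injective hσ (hx.comp σ.symm.injective)
  have hτ' := Monotone.strictMono_of_injective hτ (hx.comp τ.symm.injective)
  have hrange : range (x ∘ σ.symm) = range (x ∘ τ.symm) := by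
    simp only [range_comp, Equiv.range_eq_univ]
  have hcomp : x ∘ σ.symm = x ∘ τ.symm := (hσ'.range_inj hτ').1 hrange
  exact hστ <| Equiv.symm_bijective.injective <| Equiv.coe_fn_injective <| hx.comp_left hcomp

theorem aedisjoint_sortedSimplex :
    Pairwise (AEDisjoint volume on
      (sortedSimplex : (ι ≃ Fin (Fintype.card ι)) → Set (ι → ℝ))) :=
  fun _ _ hστ => measure_mono_null (sortedSimplex_inter_subset hστ)
    (addHaar_setOf_not_injective (volume : Measure (ι → ℝ)))

theorem comp_preimage_sortedSimplex (e : ι ≃ ι) (σ : ι ≃ Fin (Fintype.card ι)) :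
    (fun x : ι → ℝ => x ∘ e) ⁻¹' sortedSimplex σ = sortedSimplex (e.symm.trans σ) := by
  ext x
  simp only [sortedSimplex, mem_preimage, mem_inter_iff, mem_Icc, Pi.le_def, comp_apply,
    Pi.zero_apply, Pi.one_apply, e.forall_congr_right (q := fun i => 0 ≤ x i),
    e.forall_congr_right (q := fun i => x i ≤ 1)]
  rfl

theorem volume_sortedSimplex_eq (σ τ : ι ≃ Fin (Fintype.card ι)) :
    volume (sortedSimplex σ) = volume (sortedSimplex τ) := by
  have := (volume_preserving_comp_equiv (σ.trans τ.symm)).measure_preimage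
    (measurableSet_sortedSimplex σ).nullMeasurableSet
  have hτ : (σ.trans τ.symm).symm.trans σ = τ := by
    ext
    simp
  rwa [comp_preimage_sortedSimplex, hτ, eq_comm] at this

theorem volume_eq_sum_sortedSimplex {A : Set (ι → ℝ)}
    (s : Finset (ι ≃ Fin (Fintype.card ι))) (hsub : ∀ σ ∈ s, sortedSimplex σ ⊆ A)
    (hcover : ∀ x ∈ A, Injective x → ∃ σ ∈ s, x ∈ sortedSimplex σ) :
    volume A = ∑ σ ∈ s, volume (sortedSimplex σ) := by
  rw [← measure_biUnion_finset₀ (aedisjoint_sortedSimplex.set_pairwise _)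
    fun σ _ => (measurableSet_sortedSimplex σ).nullMeasurableSet]
  refine le_antisymm ?_ (measure_mono (iUnion₂_subset hsub))
  rw [← measure_sdiff_null (s := A) (addHaar_setOf_not_injective volume)]
  refine measure_mono fun x ⟨hxA, hx⟩ => ?_
  obtain ⟨σ, hσ, hxσ⟩ := hcover x hxA (not_not.1 hx)
  exact mem_biUnion hσ hxσ

theorem volume_sortedSimplex (σ : ι ≃ Fin (Fintype.card ι)) :
    volume (sortedSimplex σ) = ((Fintype.card ι).factorial : ℝ≥0∞)⁻¹ := by
  classical
  have hcube := volume_eq_sum_sortedSimplex (A := Icc (0 : ι → ℝ) 1) Finset.univ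
    (fun τ _ => inter_subset_left) fun x hx hinj => by
      obtain ⟨τ, hτ⟩ := exists_strictMono_comp_symm hinj
      exact ⟨τ, Finset.mem_univ τ, hx, hτ.monotone⟩
  simp only [Real.volume_Icc_pi, Pi.one_apply, Pi.zero_apply, sub_zero, ofReal_one,
    Finset.prod_const_one, volume_sortedSimplex_eq _ σ, Finset.sum_const, Finset.card_univ,
    Fintype.card_equiv (Fintype.equivFin ι), nsmul_eq_mul] at hcube
  exact ENNReal.eq_inv_of_mul_eq_one_left ((mul_comm _ _).trans hcube.symm)

end SortedSimplex

section OrderPolytope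

variable {P : Type*} [PartialOrder P] [Fintype P]

theorem sortedSimplex_subset_orderPolytope {σ : P ≃ Fin (Fintype.card P)}
    (hσ : ∀ u v : P, u < v → σ u < σ v) : sortedSimplex σ ⊆ orderPolytope P := by
  rintro x ⟨hx, hmono⟩
  refine ⟨fun u => ⟨hx.1 u, hx.2 u⟩, fun u v huv => ?_⟩
  simpa using hmono ((show StrictMono σ from hσ).monotone huv)

theorem exists_linearExtension_mem_sortedSimplex {x : P → ℝ} (hx : x ∈ orderPolytope P)
    (hinj : Injective x) :
    ∃ σ : P ≃ Fin (Fintype.card P),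
      (∀ u v : P, u < v → σ u < σ v) ∧ x ∈ sortedSimplex σ := by
  obtain ⟨σ, hσ⟩ := exists_strictMono_comp_symm hinj
  refine ⟨σ, fun u v huv => hσ.lt_iff_lt.1 ?_,
    ⟨fun u => (hx.1 u).1, fun u => (hx.1 u).2⟩, hσ.monotone⟩
  simpa using (hx.2 u v huv.le).lt_of_ne (hinj.ne huv.ne)

end OrderPolytope

/-- The Lebesgue measure of the order polytope `Δ(P) ⊆ ℝ^P` of a finite poset `P`
with `n` elements equals `e(P)/n!`, where `e(P)` is the number of linear extensions
of `P`, i.e. of bijections `g : P ≃ Fin n` with `u < v → g u < g v`. -/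
theorem volume_orderPolytope (P : Type*) [PartialOrder P] [Fintype P] :
    volume (orderPolytope P) =
      (Nat.card {g : P ≃ Fin (Fintype.card P) // ∀ u v : P, u < v → g u < g v} : ℝ≥0∞) /
        (Nat.factorial (Fintype.card P) : ℝ≥0∞) := by
  classical
  let linearExtensions := Finset.univ.filter fun σ : P ≃ Fin (Fintype.card P) =>
    ∀ u v : P, u < v → σ u < σ v
  have hvol := volume_eq_sum_sortedSimplex linearExtensions
    (fun σ hσ => sortedSimplex_subset_orderPolytope (Finset.mem_filter.1 hσ).2)
    fun x hx hinj => by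
      obtain ⟨σ, hσ, hxσ⟩ := exists_linearExtension_mem_sortedSimplex hx hinj
      exact ⟨σ, Finset.mem_filter.2 ⟨Finset.mem_univ σ, hσ⟩, hxσ⟩
  rw [hvol, Finset.sum_congr rfl fun σ _ => volume_sortedSimplex σ, Finset.sum_const,
    nsmul_eq_mul, ← div_eq_mul_inv, Nat.card_eq_fintype_card, Fintype.card_subtype]
end

section
/- Let P and P' be finite posets with bounded posets P̂ and P̂', and let φ : P̂ → P̂' be a surjective order-preserving map with φ(0̂) = 0̂ and φ(1̂) = 1̂ which lifts covering relations: for every covering relation ū ⋖ v̄ in P̂' there exist u ⋖ v in P̂ with φ(u) = ū and φ(v) = v̄. For x' ∈ ℝ^{P'} let x̂' : P̂' → ℝ extend x' by x̂'(0̂) = 0 and x̂'(1̂) = 1, and define Φ(x') ∈ ℝ^P by Φ(x')_u = x̂'(φ(u)) for u ∈ P. Then Φ restricts to an injective map from Δ(P') into Δ(P) whose image is exactly {x ∈ Δ(P) : the extension x̂ of x with x̂(0̂) = 0, x̂(1̂) = 1 is constant on every fiber of φ}. (This realizes the face of Δ(P) associated to the contraction φ as a copy of the order polytope Δ(P').)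 -/
/-- The bounded poset `P̂ = 0̂ ⊕ P ⊕ 1̂`. -/
abbrev Phat (P : Type*) := WithBot (WithTop P)

/-- The inclusion `P → P̂`. -/
def toHat {P : Type*} (u : P) : Phat P := ((u : WithTop P) : Phat P)

/-- Extend `x : P → ℝ` to `P̂ → ℝ` with `x̂(0̂) = 0` and `x̂(1̂) = 1`. -/
def extendHat {P : Type*} (x : P → ℝ) : Phat P → ℝ :=
  WithBot.recBotCoe 0 (WithTop.recTopCoe 1 x)

lemma extendHat_bot {P : Type*} (x : P → ℝ) : extendHat x ⊥ = 0 := rfl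
lemma extendHat_top {P : Type*} (x : P → ℝ) : extendHat x ⊤ = 1 := rfl
lemma extendHat_toHat {P : Type*} (x : P → ℝ) (u : P) : extendHat x (toHat u) = x u := rfl

lemma extendHat_mem_Icc {P : Type*} [PartialOrder P] {x : P → ℝ}
    (hx : x ∈ orderPolytope P) (a : Phat P) : 0 ≤ extendHat x a ∧ extendHat x a ≤ 1 := by
  induction a using WithBot.recBotCoe with
  | bot => simp [extendHat_bot]
  | coe a =>
    induction a using WithTop.recTopCoe with
    | top => simp [extendHat_top]
    | coe a => exact hx.1 a

lemma extendHat_mono {P : Type*} [PartialOrder P] {x : P → ℝ}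
    (hx : x ∈ orderPolytope P) : Monotone (extendHat x) := by
  intro a b hab
  induction a using WithBot.recBotCoe with
  | bot => exact (extendHat_mem_Icc hx b).1
  | coe a =>
    induction b using WithBot.recBotCoe with
    | bot => exact absurd hab (by simp)
    | coe b =>
      induction b using WithTop.recTopCoe with
      | top => exact (extendHat_mem_Icc hx _).2
      | coe b =>
        induction a using WithTop.recTopCoe with
        | top => exact absurd (WithBot.coe_le_coe.mp hab) (by simp)
        | coe a =>
          exact hx.2 a b (by exact_mod_cast hab)


/-- Given a contraction `φ : P̂ → P̂'` (surjective, order-preserving, sending `0̂ ↦ 0̂`,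
`1̂ ↦ 1̂`, and lifting covering relations), the map `Φ : ℝ^{P'} → ℝ^P`,
`Φ(x')_u = x̂'(φ u)`, restricts to an injection of `Δ(P')` into `Δ(P)` whose image is
exactly the set of points of `Δ(P)` whose extension is constant on every fiber of `φ`:
the face of `Δ(P)` associated to the contraction `φ` is a copy of `Δ(P')`. -/
theorem orderPolytope_face_of_contraction (P P' : Type*)
    [PartialOrder P] [PartialOrder P'] [Fintype P] [Fintype P']
    (φ : Phat P → Phat P') (hmono : Monotone φ) (hsurj : Function.Surjective φ)
    (hbot : φ ⊥ = ⊥) (htop : φ ⊤ = ⊤)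
    (hcov : ∀ u' v' : Phat P', u' ⋖ v' →
      ∃ u v : Phat P, u ⋖ v ∧ φ u = u' ∧ φ v = v') :
    Set.InjOn (fun (x' : P' → ℝ) (u : P) => extendHat x' (φ (toHat u)))
      (orderPolytope P') ∧
    (fun (x' : P' → ℝ) (u : P) => extendHat x' (φ (toHat u))) '' orderPolytope P' =
      {x ∈ orderPolytope P |
        ∀ a b : Phat P, φ a = φ b → extendHat x a = extendHat x b} := by
  classical
  -- key: extendHat (Φ x') = extendHat x' ∘ φ
  have key : ∀ (x' : P' → ℝ) (a : Phat P),
      extendHat (fun u => extendHat x' (φ (toHat u))) a = extendHat x' (φ a) := by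
    intro x' a
    induction a using WithBot.recBotCoe with
    | bot => rw [hbot]; rfl
    | coe a =>
      induction a using WithTop.recTopCoe with
      | top => rw [show ((⊤ : WithTop P) : Phat P) = ⊤ from rfl, htop]; rfl
      | coe a => rfl
  -- surjectivity onto P' part: every toHat u' is φ (toHat u)
  have hsurj' : ∀ u' : P', ∃ u : P, φ (toHat u) = toHat u' := by
    intro u'
    obtain ⟨a, ha⟩ := hsurj (toHat u')
    induction a using WithBot.recBotCoe with
    | bot => rw [hbot] at ha; exact absurd ha.symm (by simp [toHat])
    | coe a =>
      induction a using WithTop.recTopCoe with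
      | top =>
        rw [show ((⊤ : WithTop P) : Phat P) = ⊤ from rfl, htop] at ha
        exact absurd ha.symm (by simp [toHat])
      | coe a => exact ⟨a, ha⟩
  constructor
  · intro x' hx' y' hy' h
    funext u'
    obtain ⟨u, hu⟩ := hsurj' u'
    have := congrFun h u
    simpa [hu, extendHat_toHat] using this
  · ext x
    constructor
    · rintro ⟨x', hx', rfl⟩
      refine ⟨⟨fun u => extendHat_mem_Icc hx' (φ (toHat u)),
        fun u v huv => extendHat_mono hx' (hmono (by simp [toHat, huv]))⟩, ?_⟩
      intro a b hab
      rw [key, key, hab]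
    · rintro ⟨hx, hfib⟩
      set ch : P' → P := fun u' => (hsurj' u').choose with hchdef
      have hx'spec : ∀ u' : P', φ (toHat (ch u')) = toHat u' := fun u' => (hsurj' u').choose_spec
      set x' : P' → ℝ := fun u' => extendHat x (toHat (ch u')) with hx'def
      -- extendHat x' ∘ φ = extendHat x on fibers
      have hcomp2 : ∀ a' : Phat P', ∀ a : Phat P, φ a = a' → extendHat x' a' = extendHat x a := by
        intro a' a ha
        induction a' using WithBot.recBotCoe with
        | bot =>
          rw [extendHat_bot, ← extendHat_bot x]
          exact hfib ⊥ a (by rw [hbot, ha])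
        | coe b' =>
          induction b' using WithTop.recTopCoe with
          | top =>
            rw [show ((⊤ : WithTop P') : Phat P') = ⊤ from rfl] at ha ⊢
            rw [extendHat_top, ← extendHat_top x]
            exact hfib ⊤ a (by rw [htop, ha])
          | coe u' =>
            rw [show ((u' : WithTop P') : Phat P') = toHat u' from rfl] at ha ⊢
            rw [extendHat_toHat, hx'def]
            exact hfib _ a (by rw [hx'spec u', ha])
      have hcomp : ∀ a : Phat P, extendHat x' (φ a) = extendHat x a := fun a => hcomp2 _ a rfl
      -- monotonicity of extendHat x' via covering lift
      letI : Fintype (Phat P') := inferInstanceAs (Fintype (Option (Option P')))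
      letI : LocallyFiniteOrder (Phat P') := Fintype.toLocallyFiniteOrder
      have hmono' : Monotone (extendHat x') := by
        intro a' b' hab
        have h2 := le_iff_reflTransGen_covBy.mp hab
        clear hab
        induction h2 with
        | refl => rfl
        | tail _ hc ih =>
            rename_i b' c' _
            obtain ⟨u, v, huv, hu, hv⟩ := hcov b' c' hc
            calc extendHat x' a' ≤ extendHat x' b' := ih
              _ = extendHat x u := hcomp2 _ _ hu
              _ ≤ extendHat x v := extendHat_mono hx huv.le
              _ = extendHat x' c' := (hcomp2 _ _ hv).symm
      refine ⟨x', ⟨fun u' => ?_, fun u' v' h => ?_⟩, ?_⟩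
      · rw [hx'def]; exact extendHat_mem_Icc hx _
      · have := hmono' (show toHat u' ≤ toHat v' by
          simpa [toHat, WithBot.coe_le_coe, WithTop.coe_le_coe] using h)
        simpa [extendHat_toHat] using this
      · funext u; exact hcomp (toHat u)
end

section
/- Let P be a finite poset and τ an order ideal of P. In the free abelian group ℤ^E, let 1_{E(τ)} and 1_{E(P)} denote the indicator vectors of the edge sets E(τ) and E(P), and for u ∈ P define r_u ∈ ℤ^E by r_u(e) = [s(e) = u] − [t(e) = u]. Then 1_{E(τ)} − 1_{E(P)} = Σ_{u ∈ P ∖ τ} r_u. (Since the r_u generate the linear equivalences among invariant divisors, this exhibits the linear equivalence D_{E(τ)} ∼ D_{E(P)} on the Hibi toric variety.) -/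
/-- The set of edges (covering pairs) of `P̂`; for `e = (u ⋖ v)` we write
`t(e) = e.1` and `s(e) = e.2`. -/
def edgeSet (P : Type*) [PartialOrder P] : Set (Phat P × Phat P) :=
  {e | e.1 ⋖ e.2}

/-- Membership of `a ∈ P̂` in `{0̂} ∪ τ` for a subset `τ ⊆ P`. -/
def memHat {P : Type*} (τ : Set P) (a : Phat P) : Prop :=
  a = ⊥ ∨ ∃ u ∈ τ, a = toHat u

/-- For `E' ⊆ E` and `τ ⊆ P`, the subset
`E'(τ) = {e ∈ E' : t(e) ∈ {0̂} ∪ τ, s(e) ∉ {0̂} ∪ τ}`. -/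
def edgeCut {P : Type*} [PartialOrder P] (E' : Set (Phat P × Phat P)) (τ : Set P) :
    Set (Phat P × Phat P) :=
  {e ∈ E' | memHat τ e.1 ∧ ¬ memHat τ e.2}

/-- The vector `r_u ∈ ℤ^E`, `r_u(e) = [s(e) = u] − [t(e) = u]`, encoding the linear
equivalence relation `∑_{s(e)=u} D_e ∼ ∑_{t(e)=u} D_e` among invariant divisors. -/
noncomputable def rVec {P : Type*} [PartialOrder P] (u : P) :
    (edgeSet P) → ℤ :=
  fun e => Set.indicator {e : edgeSet P | (e : Phat P × Phat P).2 = toHat u}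
      (fun _ => 1) e
    - Set.indicator {e : edgeSet P | (e : Phat P × Phat P).1 = toHat u}
      (fun _ => 1) e

section Aux
variable {P : Type*}
set_option linter.unusedSectionVars false

lemma toHat_ne_bot (u : P) : toHat u ≠ (⊥ : Phat P) := by simp [toHat]
lemma toHat_ne_top [PartialOrder P] (u : P) : toHat u ≠ ((⊤ : WithTop P) : Phat P) := by
  simp [toHat]
lemma toHat_ne_top' [PartialOrder P] (u : P) : toHat u ≠ (⊤ : Phat P) := by
  rw [← WithBot.coe_top]; exact toHat_ne_top u
lemma toHat_inj {u v : P} (h : toHat u = toHat v) : u = v := by simpa [toHat] using h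

lemma memHat_univ_iff [PartialOrder P] (x : Phat P) :
    memHat (Set.univ : Set P) x ↔ x ≠ ((⊤ : WithTop P) : Phat P) := by
  induction x using WithBot.recBotCoe with
  | bot => simp [memHat]
  | coe y =>
    induction y using WithTop.recTopCoe with
    | top =>
      simp only [memHat, ne_eq, not_true, iff_false]
      rintro (h | ⟨u, _, h⟩)
      · simp at h
      · exact toHat_ne_top u h.symm
    | coe u =>
      simp only [memHat, ne_eq]
      constructor
      · rintro _ h
        exact toHat_ne_top u h
      · intro _; exact Or.inr ⟨u, trivial, rfl⟩

lemma memHat_coe_iff (τ : Set P) (v : P) : memHat τ (toHat v) ↔ v ∈ τ := by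
  constructor
  · rintro (h | ⟨u, hu, h⟩)
    · exact absurd h (toHat_ne_bot v)
    · rwa [toHat_inj h] at *
  · intro h; exact Or.inr ⟨v, h, rfl⟩

lemma memHat_mono [PartialOrder P] {τ : Set P} (hτ : IsLowerSet τ) {a b : Phat P}
    (hab : a < b) (hb : memHat τ b) : memHat τ a := by
  rcases hb with rfl | ⟨v, hv, rfl⟩
  · exact absurd hab (by simp)
  · induction a using WithBot.recBotCoe with
    | bot => exact Or.inl rfl
    | coe w =>
      induction w using WithTop.recTopCoe with
      | top =>
        exfalso
        rw [show (((⊤ : WithTop P)) : Phat P) = ⊤ from WithBot.coe_top] at hab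
        exact not_top_lt hab
      | coe u =>
        have h1 : (u : WithTop P) < (v : WithTop P) := by
          have : ((u : WithTop P) : Phat P) < ((v : WithTop P) : Phat P) := hab
          exact_mod_cast this
        have : u < v := by exact_mod_cast h1
        exact Or.inr ⟨u, hτ this.le hv, rfl⟩

lemma memHat_subset {τ : Set P} {x : Phat P} (h : memHat τ x) :
    memHat (Set.univ : Set P) x := by
  rcases h with h | ⟨u, _, h⟩
  · exact Or.inl h
  · exact Or.inr ⟨u, trivial, h⟩

open Classical in
lemma sum_aux [PartialOrder P] [Fintype P] (τ : Set P) (x : Phat P) :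
    (∑ u : P, if u ∈ τᶜ then (if x = toHat u then (1:ℤ) else 0) else 0)
      = if ¬ memHat τ x ∧ memHat (Set.univ : Set P) x then 1 else 0 := by
  induction x using WithBot.recBotCoe with
  | bot =>
    have h : memHat τ (⊥ : Phat P) := Or.inl rfl
    rw [if_neg (by simp [h])]
    refine Finset.sum_eq_zero fun u _ => ?_
    simp [(toHat_ne_bot u).symm]
  | coe y =>
    induction y using WithTop.recTopCoe with
    | top =>
      rw [if_neg (by rw [memHat_univ_iff]; simp)]
      refine Finset.sum_eq_zero fun u _ => ?_
      have h1 : ((⊤ : WithTop P) : Phat P) ≠ toHat u := fun h => toHat_ne_top u h.symm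
      have h2 : (⊤ : Phat P) ≠ toHat u := fun h => toHat_ne_top' u h.symm
      simp [h1, h2]
    | coe v =>
      have h2 := memHat_coe_iff τ v
      have h3 : memHat (Set.univ : Set P) (toHat v) := (memHat_univ_iff _).2 (toHat_ne_top v)
      have h1 : ∀ u : P, ((v : WithTop P) : Phat P) = toHat u ↔ v = u := by
        intro u
        constructor
        · exact fun h => toHat_inj h
        · rintro rfl; rfl
      simp only [h1]
      rw [Finset.sum_eq_single v (fun u _ hu => by simp [Ne.symm hu])
        (fun h => absurd (Finset.mem_univ v) h)]
      show (if v ∈ τᶜ then if v = v then (1:ℤ) else 0 else 0)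
        = if ¬ memHat τ (toHat v) ∧ memHat (Set.univ : Set P) (toHat v) then 1 else 0
      by_cases hv : v ∈ τ <;> simp [hv, h2, h3]
end Aux


/-- For a finite poset `P` and an order ideal `τ`, in `ℤ^E` one has
`1_{E(τ)} − 1_{E(P)} = ∑_{u ∈ P ∖ τ} r_u`; this exhibits the linear equivalence
`D_{E(τ)} ∼ D_{E(P)}` on the Hibi toric variety `ℙ_{Δ(P)}`. -/
theorem indicator_edgeCut_sub (P : Type*) [PartialOrder P] [Fintype P]
    (τ : Set P) (hτ : IsLowerSet τ) :
    (Set.indicator {e : edgeSet P | (e : Phat P × Phat P) ∈ edgeCut (edgeSet P) τ}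
        (fun _ => (1 : ℤ)))
      - (Set.indicator
          {e : edgeSet P | (e : Phat P × Phat P) ∈ edgeCut (edgeSet P) Set.univ}
          (fun _ => (1 : ℤ)))
      = fun e => ∑ u : P, Set.indicator τᶜ (fun u => rVec u e) u := by
  classical
  funext e
  obtain ⟨⟨a, b⟩, hab⟩ := e
  have hab' : a ⋖ b := hab
  have hRHS : (∑ u : P, Set.indicator τᶜ (fun u => rVec u ⟨(a, b), hab⟩) u)
      = (if ¬ memHat τ b ∧ memHat (Set.univ : Set P) b then (1:ℤ) else 0)
        - (if ¬ memHat τ a ∧ memHat (Set.univ : Set P) a then (1:ℤ) else 0) := by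
    have : ∀ u : P, Set.indicator τᶜ (fun u => rVec u ⟨(a, b), hab⟩) u
        = (if u ∈ τᶜ then (if b = toHat u then (1:ℤ) else 0) else 0)
          - (if u ∈ τᶜ then (if a = toHat u then (1:ℤ) else 0) else 0) := by
      intro u
      simp only [Set.indicator_apply, rVec, Set.mem_setOf_eq]
      split <;> simp
    rw [Finset.sum_congr rfl (fun u _ => this u), Finset.sum_sub_distrib,
      sum_aux τ b, sum_aux τ a]
  rw [Pi.sub_apply, hRHS]
  have hmemτ : (⟨(a, b), hab⟩ : edgeSet P) ∈
      {e : edgeSet P | (e : Phat P × Phat P) ∈ edgeCut (edgeSet P) τ}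
      ↔ (memHat τ a ∧ ¬ memHat τ b) := by
    simp [edgeCut, Set.mem_setOf_eq, hab']
  have hmemU : (⟨(a, b), hab⟩ : edgeSet P) ∈
      {e : edgeSet P | (e : Phat P × Phat P) ∈ edgeCut (edgeSet P) (Set.univ : Set P)}
      ↔ (memHat (Set.univ : Set P) a ∧ ¬ memHat (Set.univ : Set P) b) := by
    simp only [Set.mem_setOf_eq, edgeCut, Set.mem_sep_iff]
    exact ⟨fun h => h.2, fun h => ⟨hab', h⟩⟩
  rw [Set.indicator_apply, Set.indicator_apply, if_congr hmemτ rfl rfl,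
    if_congr hmemU rfl rfl]
  have hA : memHat (Set.univ : Set P) a := by
    rw [memHat_univ_iff]
    intro h
    rw [h, WithBot.coe_top] at hab'
    exact not_top_lt hab'.lt
  have himp : memHat τ b → memHat τ a := memHat_mono hτ hab'.lt
  have himp2 : memHat τ b → memHat (Set.univ : Set P) b := memHat_subset
  by_cases h1 : memHat τ a <;> by_cases h2 : memHat τ b <;>
    by_cases h3 : memHat (Set.univ : Set P) b <;>
    simp_all
end

section
/- Let P be a finite poset with n elements and let B ⊆ E be a set of edges of P̂ such that the undirected graph on vertex set P̂ with edge set B is acyclic and has exactly two connected components, with 0̂ and 1̂ lying in different components. Then |B| = n and the family (δ(e))_{e ∈ B} is a ℤ-basis of the free abelian group ℤ^P. -/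
/-- `χ_w ∈ ℤ^P` for `w ∈ P̂`: the standard basis vector for `w ∈ P`, and `0` for `0̂, 1̂`. -/
def chiHat {P : Type*} [DecidableEq P] : Phat P → (P → ℤ) :=
  WithBot.recBotCoe 0 (WithTop.recTopCoe 0 (fun v => Pi.single v 1))

/-- `δ(e) = χ_{t(e)} − χ_{s(e)} ∈ ℤ^P` for an edge `e = (t(e), s(e))` of `P̂`. -/
def deltaVec {P : Type*} [DecidableEq P] (e : Phat P × Phat P) : P → ℤ :=
  chiHat e.1 - chiHat e.2

open SimpleGraph

theorem LinearIndependent.of_pairwise_dual_eq_zero_isUnit {ι R M : Type*} [CommRing R]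
    [AddCommGroup M] [Module R M] (v : ι → M) (f : ι → Module.Dual R M)
    (h1 : Pairwise fun i j ↦ f i (v j) = 0) (h2 : ∀ i, IsUnit (f i (v i))) :
    LinearIndependent R v :=
  .of_pairwise_dual_eq_zero_one v (fun i ↦ (h2 i).unit⁻¹ • f i)
    (fun i j hij ↦ by simp [h1 hij]) (fun i ↦ by simp [Units.smul_def])

theorem Set.ncard_eq_finrank_of_linearIndependent {α R M : Type*} [Ring R]
    [StrongRankCondition R] [AddCommGroup M] [Module R M] (f : α → M) {s : Set α}
    (hli : LinearIndependent R fun x : s ↦ f x) (hspan : Submodule.span R (f '' s) = ⊤) :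
    s.ncard = Module.finrank R M := by
  rw [Set.image_eq_range] at hspan
  rw [Module.finrank_eq_nat_card_basis (Module.Basis.mk hli hspan.ge), Nat.card_coe_set_eq]

theorem Prod.eq_of_sym2_eq_of_lt {α : Type*} [Preorder α] {e e' : α × α}
    (he : e.1 < e.2) (he' : e'.1 < e'.2) (h : s(e.1, e.2) = s(e'.1, e'.2)) : e = e' := by
  rcases Sym2.eq_iff.mp h with ⟨h1, h2⟩ | ⟨h1, h2⟩
  · exact Prod.ext h1 h2
  · exact absurd ((he.trans_eq h2).trans (he'.trans_eq h1.symm)) (lt_irrefl _)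

theorem SimpleGraph.sub_mem_span_of_reachable_fromRel {V R M : Type*} [Ring R]
    [AddCommGroup M] [Module R M] (χ : V → M) {B : Set (V × V)} {a b : V}
    (h : (fromRel fun x y ↦ (x, y) ∈ B).Reachable a b) :
    χ a - χ b ∈ Submodule.span R ((fun e ↦ χ e.1 - χ e.2) '' B) := by
  obtain ⟨w⟩ := h
  induction w with
  | nil => simp
  | @cons x y z hxy _ ih =>
    have hstep : χ x - χ y ∈ Submodule.span R ((fun e ↦ χ e.1 - χ e.2) '' B) := by
      rcases ((fromRel_adj _ _ _).mp hxy).2 with h | h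
      · exact Submodule.subset_span ⟨(x, y), h, rfl⟩
      · simpa using neg_mem (Submodule.subset_span (R := R)
          (Set.mem_image_of_mem (fun e ↦ χ e.1 - χ e.2) h))
    simpa using add_mem hstep ih

theorem SimpleGraph.IsAcyclic.exists_cut_of_not_reachable {V : Type*} {G : SimpleGraph V}
    {a b u v : V} (hG : G.IsAcyclic) (hab : G.Adj a b) (huv : ¬G.Reachable u v) :
    ∃ S : Set V, u ∉ S ∧ v ∉ S ∧ (a ∈ S ↔ b ∉ S) ∧
      ∀ ⦃x y⦄, G.Adj x y → s(x, y) ≠ s(a, b) → (x ∈ S ↔ y ∈ S) := by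
  set H := G.deleteEdges {s(a, b)}
  have hbridge : ¬H.Reachable a b :=
    isBridge_iff.mp (isAcyclic_iff_forall_adj_isBridge.mp hG hab)
  have hHG {x y : V} (h : H.Reachable x y) : G.Reachable x y := h.mono (deleteEdges_le _)
  have hcomponent {c c' : V} (hs : s(c, c') = s(a, b)) (hcc' : ¬H.Reachable c c')
      (hu : ¬H.Reachable u c) (hv : ¬H.Reachable v c) :
      ∃ S : Set V, u ∉ S ∧ v ∉ S ∧ (a ∈ S ↔ b ∉ S) ∧
        ∀ ⦃x y⦄, G.Adj x y → s(x, y) ≠ s(a, b) → (x ∈ S ↔ y ∈ S) := by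
    refine ⟨{w | H.Reachable w c}, hu, hv, ?_, fun x y hxy hne ↦ ?_⟩
    · have hc' : ¬H.Reachable c' c := fun h ↦ hcc' h.symm
      rcases Sym2.eq_iff.mp hs with ⟨rfl, rfl⟩ | ⟨rfl, rfl⟩ <;>
        simp only [Set.mem_ofPred_eq] <;> tauto
    · have hH : H.Adj x y := (deleteEdges_adj ..).mpr ⟨hxy, hne⟩
      exact ⟨hH.symm.reachable.trans, hH.reachable.trans⟩
  by_cases ha : H.Reachable u a ∨ H.Reachable v a
  · refine hcomponent Sym2.eq_swap (fun h ↦ hbridge h.symm) (fun hub ↦ ?_) (fun hvb ↦ ?_) <;>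
      rcases ha with hua | hva
    · exact hbridge (hua.symm.trans hub)
    · exact huv ((hHG hub).trans (hab.reachable.symm.trans (hHG hva).symm))
    · exact huv ((hHG hua).trans (hab.reachable.trans (hHG hvb).symm))
    · exact hbridge (hva.symm.trans hvb)
  · rw [not_or] at ha
    exact hcomponent rfl hbridge ha.1 ha.2

theorem Phat.eq_bot_or_eq_top_or_eq_toHat {P : Type*} (w : Phat P) :
    w = ⊥ ∨ w = ⊤ ∨ ∃ p : P, w = toHat p := by
  induction w using WithBot.recBotCoe with
  | bot => exact .inl rfl
  | coe x =>
    induction x using WithTop.recTopCoe with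
    | top => exact .inr (.inl rfl)
    | coe p => exact .inr (.inr ⟨p, rfl⟩)

section Delta

variable {P : Type*} [DecidableEq P]

@[simp] theorem chiHat_bot : chiHat (⊥ : Phat P) = 0 := rfl

@[simp] theorem chiHat_top : chiHat (⊤ : Phat P) = 0 := rfl

@[simp] theorem chiHat_toHat (p : P) : chiHat (toHat p) = Pi.single p 1 := rfl

theorem span_deltaVec_eq_top [Fintype P] (B : Set (Phat P × Phat P))
    (hcover : ∀ a : Phat P, (fromRel fun a b ↦ (a, b) ∈ B).Reachable a ⊥ ∨
      (fromRel fun a b ↦ (a, b) ∈ B).Reachable a ⊤) :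
    Submodule.span ℤ (deltaVec '' B) = ⊤ := by
  have hmem {a b : Phat P} (h : (fromRel fun a b ↦ (a, b) ∈ B).Reachable a b) :
      chiHat a - chiHat b ∈ Submodule.span ℤ (deltaVec '' B) :=
    sub_mem_span_of_reachable_fromRel chiHat h
  rw [eq_top_iff, ← (Pi.basisFun ℤ P).span_eq, Submodule.span_le]
  rintro _ ⟨p, rfl⟩
  rcases hcover (toHat p) with h | h <;> simpa using hmem h

open Classical in
noncomputable def cutFunctional [Fintype P] (S : Set (Phat P)) : Module.Dual ℤ (P → ℤ) :=
  ∑ q with toHat q ∈ S, LinearMap.proj q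

theorem cutFunctional_chiHat [Fintype P] {S : Set (Phat P)} (hbot : ⊥ ∉ S) (htop : ⊤ ∉ S)
    (w : Phat P) : cutFunctional S (chiHat w) = S.indicator 1 w := by
  rcases Phat.eq_bot_or_eq_top_or_eq_toHat w with rfl | rfl | ⟨p, rfl⟩
  · simp [hbot]
  · simp [htop]
  · classical
    by_cases hp : toHat p ∈ S <;> simp [cutFunctional, hp, Pi.single_apply]

theorem cutFunctional_deltaVec [Fintype P] {S : Set (Phat P)} (hbot : ⊥ ∉ S) (htop : ⊤ ∉ S)
    (e : Phat P × Phat P) :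
    cutFunctional S (deltaVec e) = S.indicator 1 e.1 - S.indicator 1 e.2 := by
  rw [deltaVec, map_sub, cutFunctional_chiHat hbot htop, cutFunctional_chiHat hbot htop]

theorem linearIndependent_deltaVec [Preorder P] [Fintype P] (B : Set (Phat P × Phat P))
    (hB : ∀ e ∈ B, e.1 < e.2) (hacyclic : (fromRel fun a b ↦ (a, b) ∈ B).IsAcyclic)
    (hsep : ¬(fromRel fun a b ↦ (a, b) ∈ B).Reachable ⊥ ⊤) :
    LinearIndependent ℤ fun e : B ↦ deltaVec (e : Phat P × Phat P) := by
  have hadj (e : B) : (fromRel fun a b ↦ (a, b) ∈ B).Adj e.1.1 e.1.2 :=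
    (fromRel_adj _ _ _).mpr ⟨(hB e e.2).ne, .inl e.2⟩
  choose S hbot htop hcut hsame using
    fun e : B ↦ hacyclic.exists_cut_of_not_reachable (hadj e) hsep
  refine .of_pairwise_dual_eq_zero_isUnit _ (fun e ↦ cutFunctional (S e))
    (fun e e' hne ↦ ?_) (fun e ↦ ?_) <;>
    simp only [cutFunctional_deltaVec (hbot _) (htop _)]
  · have hs : s(e'.1.1, e'.1.2) ≠ s(e.1.1, e.1.2) := fun h ↦
      hne (Subtype.ext (Prod.eq_of_sym2_eq_of_lt (hB _ e'.2) (hB _ e.2) h)).symm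
    have := hsame e (hadj e') hs
    by_cases h : e'.1.1 ∈ S e <;> simp [h, this.mp, mt this.mpr]
  · rw [Int.isUnit_iff]
    by_cases h : e.1.1 ∈ S e
    · simp [h, (hcut e).mp h]
    · simp [h, not_not.mp (mt (hcut e).mpr h)]

end Delta

/-- Let `B` be a set of edges of `P̂` such that the corresponding undirected graph on
`P̂` is acyclic and has exactly two connected components, separating `0̂` from `1̂`.
Then `|B| = |P|` and the family `(δ(e))_{e ∈ B}` is a `ℤ`-basis of `ℤ^P`. -/
theorem deltaVec_basis_of_two_trees (P : Type*) [PartialOrder P] [Fintype P]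
    [DecidableEq P] (B : Set (Phat P × Phat P))
    (hB : ∀ e ∈ B, e.1 ⋖ e.2)
    (hacyclic : (SimpleGraph.fromRel fun a b => (a, b) ∈ B).IsAcyclic)
    (hsep : ¬ (SimpleGraph.fromRel fun a b => (a, b) ∈ B).Reachable
      (⊥ : Phat P) (⊤ : Phat P))
    (hcover : ∀ a : Phat P,
      (SimpleGraph.fromRel fun a b => (a, b) ∈ B).Reachable a (⊥ : Phat P) ∨
      (SimpleGraph.fromRel fun a b => (a, b) ∈ B).Reachable a (⊤ : Phat P)) :
    B.ncard = Fintype.card P ∧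
    LinearIndependent ℤ (fun e : B => deltaVec (e : Phat P × Phat P)) ∧
    Submodule.span ℤ (deltaVec '' B) = (⊤ : Submodule ℤ (P → ℤ)) := by
  have hli := linearIndependent_deltaVec B (fun e he ↦ (hB e he).lt) hacyclic hsep
  have hspan := span_deltaVec_eq_top B hcover
  exact ⟨(Set.ncard_eq_finrank_of_linearIndependent deltaVec hli hspan).trans
    (Module.finrank_fintype_fun_eq_card ℤ), hli, hspan⟩
end

section
/- Let P be a finite poset and J(P) its lattice of order ideals. Consider the ℂ-algebra homomorphism π from the polynomial ring ℂ[p_τ : τ ∈ J(P)] to the polynomial ring ℂ[t, x_u : u ∈ P] determined by π(p_τ) = t · Π_{u ∈ τ} x_u. Then the kernel of π is generated, as an ideal, by the binomials p_α p_β − p_{α∪β} p_{α∩β} for all pairs of incomparable α, β ∈ J(P). (Thus the Hibi algebra A_{J(P)} = ℂ[J(P)]/ker π, the homogeneous coordinate ring of the Hibi toric variety ℙ_{Δ(P)}, is defined by quadratic binomials.) -/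
/-!
Write `E d` for the exponent of `π(∏ p_τ ^ d τ)`; it records the degree of `d` and, for every
`u ∈ P`, how many ideals of `d` (with multiplicity) contain `u`. The binomials lie in `ker π`
because `E(α ∪ β) + E(α ∩ β) = E α + E β`. Conversely, modulo the binomials every monomial is
congruent to a standard one, whose ideals form a chain: replacing an incomparable pair `α, β`
by `α ∪ β, α ∩ β` keeps the degree and strictly increases `∑ d τ · |τ|²`, which is bounded by
`deg d · |P|²`. Finally `E` is injective on standard monomials, since the largest ideal of a
chain is the set of `u` with nonzero exponent and can be peeled off. Hence a polynomial of
`ker π` that is a combination of standard monomials vanishes.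
-/

open MvPolynomial

section MonomialMap

variable {σ ι : Type*} {v : σ → ι →₀ ℕ}

section CommSemiring

variable {R : Type*} [CommSemiring R]

theorem aeval_monomial_monomial (d : σ →₀ ℕ) (c : R) :
    aeval (fun i => monomial (v i) (1 : R)) (monomial d c) =
      monomial (Finsupp.linearCombination ℕ v d) c := by
  have hprod : (d.prod fun i k => monomial (v i) (1 : R) ^ k) =
      monomial (∑ i ∈ d.support, d i • v i) 1 := by
    rw [monomial_sum_one]
    exact Finset.prod_congr rfl fun i _ => by simp only [monomial_pow, one_pow]
  rw [aeval_monomial, hprod, algebraMap_eq, C_mul_monomial, mul_one,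
    Finsupp.linearCombination_apply, Finsupp.sum]

theorem eq_zero_of_aeval_monomial_eq_zero {S : Set (σ →₀ ℕ)}
    (hS : S.InjOn (Finsupp.linearCombination ℕ v)) {g : MvPolynomial σ R}
    (hg : ↑g.support ⊆ S) (h : aeval (fun i => monomial (v i) (1 : R)) g = 0) : g = 0 := by
  classical
  ext d
  by_contra hd
  have hdS : d ∈ S := hg (mem_support_iff.2 hd)
  have hcoeff : coeff (Finsupp.linearCombination ℕ v d)
      (aeval (fun i => monomial (v i) (1 : R)) g) = coeff d g := by
    conv_lhs => rw [g.as_sum, map_sum]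
    simp only [aeval_monomial_monomial, coeff_sum, coeff_monomial]
    rw [Finset.sum_eq_single d (fun d' hd' hne => if_neg fun heq => hne (hS (hg hd') hdS heq))
      (fun hd' => by rw [notMem_support_iff.1 hd', ite_self]), if_pos rfl]
  rw [h, coeff_zero] at hcoeff
  exact hd hcoeff.symm

end CommSemiring

theorem ker_aeval_monomial_le {R : Type*} [CommRing R] {S : Set (σ →₀ ℕ)}
    (hS : S.InjOn (Finsupp.linearCombination ℕ v)) {I : Ideal (MvPolynomial σ R)}
    (hI : I ≤ RingHom.ker (aeval (fun i => monomial (v i) (1 : R))))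
    (hstraighten : ∀ d, ∃ e ∈ S, monomial d (1 : R) - monomial e 1 ∈ I) :
    RingHom.ker (aeval (fun i => monomial (v i) (1 : R))) ≤ I := by
  classical
  intro f hf
  choose s hsS hsI using hstraighten
  set g : MvPolynomial σ R := ∑ d ∈ f.support, monomial (s d) (coeff d f)
  have hfg : f - g ∈ I := by
    have hsum : f - g = ∑ d ∈ f.support, C (coeff d f) * (monomial d 1 - monomial (s d) 1) := by
      conv_lhs => rw [f.as_sum]
      simp only [g, ← Finset.sum_sub_distrib, mul_sub, C_mul_monomial, mul_one]
    rw [hsum]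
    exact I.sum_mem fun d _ => I.mul_mem_left _ (hsI d)
  have hg : g = 0 := by
    refine eq_zero_of_aeval_monomial_eq_zero hS (fun e he => ?_) ?_
    · obtain ⟨d, -, hd⟩ := Finset.mem_biUnion.1 (support_sum he)
      rw [Finset.mem_singleton.1 (support_monomial_subset hd)]
      exact hsS d
    · have hker := RingHom.mem_ker.1 (hI hfg)
      rwa [map_sub, RingHom.mem_ker.1 hf, zero_sub, neg_eq_zero] at hker
  rwa [hg, sub_zero] at hfg

end MonomialMap

theorem Finset.exists_isGreatest_of_isChain {α : Type*} [Preorder α] {s : Finset α}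
    (hs : IsChain (· ≤ ·) (s : Set α)) (hne : s.Nonempty) : ∃ M, IsGreatest (s : Set α) M := by
  obtain ⟨M, hM⟩ := s.exists_maximal hne
  exact ⟨M, hM.prop, fun x hx => (hs.total hx hM.prop).elim id (hM.2 hx)⟩

theorem Set.ncard_sq_add_ncard_sq_lt {α : Type*} [Finite α] {s t : Set α} (hst : ¬ s ⊆ t)
    (hts : ¬ t ⊆ s) : s.ncard ^ 2 + t.ncard ^ 2 < (s ∪ t).ncard ^ 2 + (s ∩ t).ncard ^ 2 := by
  have hs : s.ncard < (s ∪ t).ncard :=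
    Set.ncard_lt_ncard (Set.subset_union_left.ssubset_of_not_subset fun h =>
      hts (Set.union_subset_iff.1 h).2)
  have ht : t.ncard < (s ∪ t).ncard :=
    Set.ncard_lt_ncard (Set.subset_union_right.ssubset_of_not_subset fun h =>
      hst (Set.union_subset_iff.1 h).1)
  have hsum := Set.ncard_union_add_ncard_inter s t
  nlinarith

theorem Finsupp.weight_le_degree_mul {σ : Type*} {w : σ → ℕ} {B : ℕ} (hw : ∀ i, w i ≤ B)
    (d : σ →₀ ℕ) : Finsupp.weight w d ≤ d.degree * B := by
  rw [Finsupp.weight_apply, Finsupp.degree_apply, Finset.sum_mul]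
  exact Finset.sum_le_sum fun i _ => Nat.mul_le_mul_left _ (hw i)

abbrev OrderIdeals (P : Type*) [LE P] : Type _ := {τ : Set P // IsLowerSet τ}

namespace OrderIdeals

variable {P : Type*} [LE P]

def union (α β : OrderIdeals P) : OrderIdeals P := ⟨α ∪ β, α.2.union β.2⟩

def inter (α β : OrderIdeals P) : OrderIdeals P := ⟨α ∩ β, α.2.inter β.2⟩

end OrderIdeals

def hibiRelations (P R : Type*) [LE P] [CommRing R] : Set (MvPolynomial (OrderIdeals P) R) :=
  {f | ∃ α β : OrderIdeals P, (¬ α ≤ β ∧ ¬ β ≤ α) ∧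
    f = X α * X β - X (α.union β) * X (α.inter β)}

section Hibi

variable {P : Type*} [Fintype P]

noncomputable def hibiExponent (s : Set P) : Option P →₀ ℕ :=
  Finsupp.single none 1 + ∑ u, Finsupp.single (some u) (s.indicator (fun _ => 1) u)

@[simp]
theorem hibiExponent_none (s : Set P) : hibiExponent s none = 1 := by
  simp [hibiExponent]

@[simp]
theorem hibiExponent_some (s : Set P) (u : P) :
    hibiExponent s (some u) = s.indicator (fun _ => 1) u := by
  classical
  simp [hibiExponent, Finsupp.single_apply]

theorem hibiExponent_union_add_inter (s t : Set P) :
    hibiExponent (s ∪ t) + hibiExponent (s ∩ t) = hibiExponent s + hibiExponent t := by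
  ext (_ | u)
  · simp
  · by_cases hs : u ∈ s <;> by_cases ht : u ∈ t <;> simp [hs, ht]

theorem X_none_mul_prod_X_some_pow_indicator {R : Type*} [CommSemiring R] (s : Set P) :
    (X none * ∏ u, X (some u) ^ s.indicator (fun _ => 1) u : MvPolynomial (Option P) R) =
      monomial (hibiExponent s) 1 := by
  simp only [X, monomial_pow, one_pow, ← monomial_sum_one, monomial_mul, hibiExponent,
    Finsupp.smul_single, smul_eq_mul, mul_one]

variable [LE P]

noncomputable abbrev hibiExponents : (OrderIdeals P →₀ ℕ) →ₗ[ℕ] Option P →₀ ℕ :=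
  Finsupp.linearCombination ℕ fun τ => hibiExponent (τ : Set P)

theorem hibiExponents_none (d : OrderIdeals P →₀ ℕ) : hibiExponents d none = d.degree := by
  simp [Finsupp.linearCombination_apply, Finsupp.sum, Finsupp.degree_apply]

theorem hibiExponents_some_ne_zero_iff (d : OrderIdeals P →₀ ℕ) (u : P) :
    hibiExponents d (some u) ≠ 0 ↔ ∃ τ ∈ d.support, u ∈ (τ : Set P) := by
  simp [Finsupp.linearCombination_apply, Finsupp.sum]

theorem coe_eq_of_isGreatest_support {d : OrderIdeals P →₀ ℕ} {M : OrderIdeals P}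
    (hM : IsGreatest (d.support : Set (OrderIdeals P)) M) :
    (M : Set P) = {u | hibiExponents d (some u) ≠ 0} := by
  ext u
  rw [Set.mem_ofPred_eq, hibiExponents_some_ne_zero_iff]
  exact ⟨fun hu => ⟨M, hM.1, hu⟩, fun ⟨τ, hτ, hu⟩ => hM.2 hτ hu⟩

theorem hibiExponents_injOn_isChain :
    Set.InjOn hibiExponents
      {d : OrderIdeals P →₀ ℕ | IsChain (· ≤ ·) (d.support : Set (OrderIdeals P))} := by
  suffices h : ∀ n, ∀ d e : OrderIdeals P →₀ ℕ, d.degree = n →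
      IsChain (· ≤ ·) (d.support : Set (OrderIdeals P)) →
      IsChain (· ≤ ·) (e.support : Set (OrderIdeals P)) →
      hibiExponents d = hibiExponents e → d = e from
    fun d hd e he hde => h _ d e rfl hd he hde
  intro n
  induction n with
  | zero =>
    intro d e hd _ _ hde
    have he : e.degree = 0 := by rw [← hibiExponents_none, ← hde, hibiExponents_none, hd]
    rw [(Finsupp.degree_eq_zero_iff d).1 hd, (Finsupp.degree_eq_zero_iff e).1 he]
  | succ n ih =>
    intro d e hd hdc hec hde
    have he : e.degree = n + 1 := by rw [← hibiExponents_none, ← hde, hibiExponents_none, hd]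
    have hne : ∀ f : OrderIdeals P →₀ ℕ, f.degree = n + 1 → f.support.Nonempty := fun f hf =>
      Finsupp.support_nonempty_iff.2 fun h0 => by simp [h0] at hf
    obtain ⟨M, hM⟩ := Finset.exists_isGreatest_of_isChain hdc (hne d hd)
    obtain ⟨M', hM'⟩ := Finset.exists_isGreatest_of_isChain hec (hne e he)
    obtain rfl : M = M' := Subtype.ext <| by
      rw [coe_eq_of_isGreatest_support hM, coe_eq_of_isGreatest_support hM', hde]
    have hsplit : ∀ f : OrderIdeals P →₀ ℕ, M ∈ f.support →
        ∃ f', f = f' + Finsupp.single M 1 := fun f hf =>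
      ⟨_, (tsub_add_cancel_of_le (Finsupp.single_le_iff.2 (Nat.one_le_iff_ne_zero.2
        (Finsupp.mem_support_iff.1 hf)))).symm⟩
    obtain ⟨d', rfl⟩ := hsplit d hM.1
    obtain ⟨e', rfl⟩ := hsplit e hM'.1
    have hsub : ∀ f : OrderIdeals P →₀ ℕ, (f.support : Set (OrderIdeals P)) ⊆
        (f + Finsupp.single M 1).support := fun f =>
      Finset.coe_subset.2 (Finsupp.support_mono le_self_add)
    congr 1
    refine ih d' e' ?_ (hdc.mono (hsub d')) (hec.mono (hsub e'))
      (by simpa using hde)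
    simpa using hd

variable {R : Type*} [CommRing R]

theorem span_hibiRelations_le_ker : Ideal.span (hibiRelations P R) ≤
    RingHom.ker (aeval fun τ : OrderIdeals P => monomial (hibiExponent (τ : Set P)) (1 : R)) := by
  rw [Ideal.span_le]
  rintro _ ⟨α, β, -, rfl⟩
  simp only [SetLike.mem_coe, RingHom.mem_ker, map_sub, map_mul, aeval_X, monomial_mul, mul_one,
    OrderIdeals.union, OrderIdeals.inter, hibiExponent_union_add_inter, sub_self]

theorem exists_exchange_of_not_isChain {d : OrderIdeals P →₀ ℕ}
    (hd : ¬ IsChain (· ≤ ·) (d.support : Set (OrderIdeals P))) :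
    ∃ d' : OrderIdeals P →₀ ℕ, d'.degree = d.degree ∧
      d.weight (fun τ : OrderIdeals P => (τ : Set P).ncard ^ 2) <
        d'.weight (fun τ : OrderIdeals P => (τ : Set P).ncard ^ 2) ∧
      monomial d (1 : R) - monomial d' 1 ∈ Ideal.span (hibiRelations P R) := by
  obtain ⟨α, hα, β, hβ, hαβ, hincomp⟩ : ∃ α ∈ d.support, ∃ β ∈ d.support, α ≠ β ∧
      ¬ α ≤ β ∧ ¬ β ≤ α := by
    simpa [IsChain, Set.Pairwise] using hd
  obtain ⟨c, rfl⟩ : ∃ c, d = c + (Finsupp.single α 1 + Finsupp.single β 1) := by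
    refine ⟨_, (tsub_add_cancel_of_le fun τ => ?_).symm⟩
    rw [Finsupp.mem_support_iff] at hα hβ
    rw [Finsupp.add_apply, Finsupp.single_apply, Finsupp.single_apply]
    split_ifs <;> subst_vars <;> first | exact absurd rfl hαβ | omega
  refine ⟨c + (Finsupp.single (α.union β) 1 + Finsupp.single (α.inter β) 1), ?_, ?_, ?_⟩
  · simp [map_add]
  · simp only [map_add, Finsupp.weight_single, one_smul, add_lt_add_iff_left]
    exact Set.ncard_sq_add_ncard_sq_lt hincomp.1 hincomp.2
  · have hfactor : monomial (c + (Finsupp.single α 1 + Finsupp.single β 1)) (1 : R) -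
        monomial (c + (Finsupp.single (α.union β) 1 + Finsupp.single (α.inter β) 1)) 1 =
        monomial c 1 * (X α * X β - X (α.union β) * X (α.inter β)) := by
      simp only [mul_sub, X, monomial_mul, mul_one]
    rw [hfactor]
    exact Ideal.mul_mem_left _ _ (Ideal.subset_span ⟨α, β, hincomp, rfl⟩)

theorem exists_isChain_monomial_sub_mem_span (d : OrderIdeals P →₀ ℕ) :
    ∃ e ∈ {e : OrderIdeals P →₀ ℕ | IsChain (· ≤ ·) (e.support : Set (OrderIdeals P))},
      monomial d (1 : R) - monomial e 1 ∈ Ideal.span (hibiRelations P R) := by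
  induction h : d.degree * Nat.card P ^ 2 -
      d.weight (fun τ : OrderIdeals P => (τ : Set P).ncard ^ 2)
    using Nat.strong_induction_on generalizing d with
  | _ n ih =>
    by_cases hd : IsChain (· ≤ ·) (d.support : Set (OrderIdeals P))
    · exact ⟨d, hd, by simp⟩
    obtain ⟨d', hdeg, hlt, hmem⟩ := exists_exchange_of_not_isChain (R := R) hd
    have hbound := Finsupp.weight_le_degree_mul
      (fun τ : OrderIdeals P => Nat.pow_le_pow_left (Set.ncard_le_card (τ : Set P)) 2) d'
    rw [hdeg] at hbound
    obtain ⟨e, he, hmem'⟩ := ih _ (by rw [hdeg]; omega) d' rfl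
    exact ⟨e, he, by simpa using add_mem hmem hmem'⟩

end Hibi

/-- The kernel of the monomial map `π : ℂ[p_τ : τ ∈ J(P)] → ℂ[t, x_u : u ∈ P]`,
`p_τ ↦ t·∏_{u ∈ τ} x_u`, is generated by the Hibi relations
`p_α p_β − p_{α∪β} p_{α∩β}` for incomparable order ideals `α, β`.  Thus the Hibi
algebra `A_{J(P)} = ℂ[J(P)]/ker π`, the homogeneous coordinate ring of the Hibi
toric variety `ℙ_{Δ(P)}`, is defined by quadratic binomials. -/
theorem ker_hibi_monomial_map (P : Type*) [PartialOrder P] [Fintype P] :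
    RingHom.ker
      (MvPolynomial.aeval
        (fun τ : {τ : Set P // IsLowerSet τ} =>
          (X (none : Option P) *
            ∏ u : P, X (some u) ^ Set.indicator (τ : Set P) (fun _ => (1 : ℕ)) u :
            MvPolynomial (Option P) ℂ)) :
        MvPolynomial {τ : Set P // IsLowerSet τ} ℂ →ₐ[ℂ] MvPolynomial (Option P) ℂ)
    = Ideal.span
        {f : MvPolynomial {τ : Set P // IsLowerSet τ} ℂ |
          ∃ α β : {τ : Set P // IsLowerSet τ}, (¬ α ≤ β ∧ ¬ β ≤ α) ∧
            f = X α * X β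
              - X (⟨(α : Set P) ∪ (β : Set P), α.2.union β.2⟩ :
                    {τ : Set P // IsLowerSet τ})
                * X (⟨(α : Set P) ∩ (β : Set P), α.2.inter β.2⟩ :
                    {τ : Set P // IsLowerSet τ})} := by
  simp only [X_none_mul_prod_X_some_pow_indicator]
  exact le_antisymm
    (ker_aeval_monomial_le hibiExponents_injOn_isChain span_hibiRelations_le_ker
      exists_isChain_monomial_sub_mem_span)
    span_hibiRelations_le_ker
end

section
/- Let P be a finite poset. The topological interior of the order polytope Δ(P) in ℝ^P is {x ∈ ℝ^P : 0 < x_u < 1 for all u ∈ P, and x_u < x_v whenever u < v in P}. In particular, Δ(P) has nonempty interior, i.e., it is a full-dimensional polytope in ℝ^P. -/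
/-- The topological interior of the order polytope `Δ(P) ⊆ ℝ^P` of a finite poset is
the set of `x` with `0 < x u < 1` for all `u` and `x u < x v` whenever `u < v`; in
particular `Δ(P)` has nonempty interior, i.e. it is full-dimensional in `ℝ^P`. -/
theorem interior_orderPolytope (P : Type*) [PartialOrder P] [Fintype P] :
    interior (orderPolytope P) =
      {x : P → ℝ | (∀ u : P, 0 < x u ∧ x u < 1) ∧
        ∀ u v : P, u < v → x u < x v} ∧
    (interior (orderPolytope P)).Nonempty := by
  classical
  have heq : interior (orderPolytope P) =
      {x : P → ℝ | (∀ u : P, 0 < x u ∧ x u < 1) ∧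
        ∀ u v : P, u < v → x u < x v} := by
    apply subset_antisymm
    · intro x hx
      have hO : orderPolytope P ∈ nhds x := mem_interior_iff_mem_nhds.mp hx
      obtain ⟨ε, hε, hball⟩ := Metric.mem_nhds_iff.mp hO
      have key : ∀ (u : P) (δ : ℝ), |δ| < ε →
          Function.update x u (x u + δ) ∈ orderPolytope P := by
        intro u δ hδ
        apply hball
        rw [Metric.mem_ball, dist_pi_lt_iff hε]
        intro b
        by_cases hb : b = u
        · subst hb
          simpa [Real.dist_eq] using hδ
        · simpa [Function.update_of_ne hb] using hε
      have hε2 : |(-(ε/2))| < ε := by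
        rw [abs_neg, abs_of_pos (by linarith)]; linarith
      have hε2' : |ε/2| < ε := by
        rw [abs_of_pos (by linarith)]; linarith
      refine ⟨fun u => ⟨?_, ?_⟩, ?_⟩
      · have h := ((key u (-(ε/2)) hε2).1 u).1
        rw [Function.update_self] at h
        linarith
      · have h := ((key u (ε/2) hε2').1 u).2
        rw [Function.update_self] at h
        linarith
      · intro u v huv
        have h := (key u (ε/2) hε2').2 u v huv.le
        rw [Function.update_self, Function.update_of_ne huv.ne'] at h
        linarith
    · apply interior_maximal
      · intro x hx
        refine ⟨fun u => ⟨(hx.1 u).1.le, (hx.1 u).2.le⟩, fun u v huv => ?_⟩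
        rcases huv.lt_or_eq with h | h
        · exact (hx.2 u v h).le
        · exact h ▸ le_refl _
      · have h1 : IsOpen {x : P → ℝ | ∀ u : P, 0 < x u ∧ x u < 1} := by
          rw [Set.setOf_forall]
          apply isOpen_iInter_of_finite
          intro u
          exact (isOpen_lt continuous_const (continuous_apply u)).inter
            (isOpen_lt (continuous_apply u) continuous_const)
        have h2 : IsOpen {x : P → ℝ | ∀ u v : P, u < v → x u < x v} := by
          rw [Set.setOf_forall]
          apply isOpen_iInter_of_finite
          intro u
          rw [Set.setOf_forall]
          apply isOpen_iInter_of_finite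
          intro v
          by_cases huv : u < v
          · have : {x : P → ℝ | u < v → x u < x v} = {x : P → ℝ | x u < x v} := by
              ext x; simp [huv]
            rw [this]
            exact isOpen_lt (continuous_apply u) (continuous_apply v)
          · have : {x : P → ℝ | u < v → x u < x v} = Set.univ := by
              ext x; simp [huv]
            rw [this]; exact isOpen_univ
        exact h1.inter h2
  refine ⟨heq, ?_⟩
  rw [heq]
  -- construct a point via a linear extension
  letI : Fintype (LinearExtension P) := ‹Fintype P›
  set n := Fintype.card P with hn
  have hcard : Fintype.card (LinearExtension P) = n := by rw [hn]; exact rfl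
  let e : Fin n ≃o LinearExtension P := monoEquivOfFin (LinearExtension P) hcard
  let g : P → ℕ := fun u => (e.symm (toLinearExtension u) : ℕ)
  have hg : ∀ u v : P, u < v → g u < g v := by
    intro u v huv
    have h1 : toLinearExtension u < toLinearExtension v := by
      apply lt_of_le_of_ne (toLinearExtension.monotone huv.le)
      intro h
      exact huv.ne (congrArg _root_.id h)
    have := e.symm.strictMono h1
    exact this
  have hglt : ∀ u : P, g u < n := fun u => (e.symm (toLinearExtension u)).isLt
  refine ⟨fun u => ((g u : ℝ) + 1) / (n + 1), fun u => ⟨?_, ?_⟩, fun u v huv => ?_⟩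
  · positivity
  · rw [div_lt_one (by positivity)]
    have := hglt u
    have := hglt u
    have : (g u : ℝ) < n := by exact_mod_cast this
    linarith
  · have h := hg u v huv
    have h' : (g u : ℝ) < g v := by exact_mod_cast h
    have hpos : (0:ℝ) < (n:ℝ) + 1 := by positivity
    exact div_lt_div_of_pos_right (by linarith) hpos
end
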